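/- For any real 0 < q < 1, indeterminate value x with |x| small (or as formal power series in x), positive integers m ≤ n, the telescoping identity holds: (q^m/([m]_q − q^m x)) · C(m,n,q,x) = ∑_{a=m}^{n} C(m,a,q,x) · q^a/([a]_q − q^a x), where C(m,n,q,x) := (-1)^{m-1} q^{m(m+1)/2} · ∏_{h=1}^{n}([h]_q − q^h x) / ([m]_q! [n−m]_q!). -/

import Mathlib

noncomputable def qint (q : ℝ) (m : ℕ) : ℝ := (1 - q ^ m) / (1 - q)

noncomputable def qfact (q : ℝ) (m : ℕ) : ℝ := ∏ a ∈ Finset.Icc 1 m, qint q a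

/-- The connector `C(m,n,q,x)`. -/
noncomputable def connector (q : ℝ) (m n : ℕ) (x : ℝ) : ℝ :=
  (-1 : ℝ) ^ (m - 1) * q ^ (m * (m + 1) / 2) *
    (∏ h ∈ Finset.Icc 1 n, (qint q h - q ^ h * x)) / (qfact q m * qfact q (n - m))

/-! Writing `D h = [h]_q - q^h x`, adding one factor to the connector multiplies it by
`D (n+1) / [n+1-m]_q`, and `D (n+1) = [n+1-m]_q + q^(n+1-m) D m`. Hence the increment of the
left-hand side from `n` to `n+1` equals the new summand, and the identity follows by induction on
`n ≥ m`. -/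

lemma qint_add (q : ℝ) (a b : ℕ) : qint q (a + b) = qint q a + q ^ a * qint q b := by
  simp only [qint, pow_add]
  ring

lemma qint_pos {q : ℝ} (hq0 : 0 < q) (hq1 : q < 1) {k : ℕ} (hk : 0 < k) : 0 < qint q k :=
  div_pos (by linarith [pow_lt_one₀ hq0.le hq1 hk.ne']) (by linarith)

lemma qfact_succ (q : ℝ) (k : ℕ) : qfact q (k + 1) = qfact q k * qint q (k + 1) :=
  Finset.prod_Icc_succ_top (Nat.le_add_left 1 k) _

lemma qint_sub_pow_mul_add (q x : ℝ) (k m : ℕ) :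
    qint q (k + m) - q ^ (k + m) * x = qint q k + q ^ k * (qint q m - q ^ m * x) := by
  rw [qint_add, pow_add]
  ring

lemma connector_succ (q x : ℝ) {m n : ℕ} (hmn : m ≤ n) :
    connector q m (n + 1) x =
      connector q m n x * (qint q (n + 1) - q ^ (n + 1) * x) / qint q (n + 1 - m) := by
  rw [connector, connector, Finset.prod_Icc_succ_top (Nat.le_add_left 1 n),
    Nat.sub_add_comm hmn, qfact_succ]
  ring

lemma connector_telescoping_step (q x : ℝ) {m n : ℕ} (hmn : m ≤ n)
    (hDm : qint q m - q ^ m * x ≠ 0) (hDn : qint q (n + 1) - q ^ (n + 1) * x ≠ 0)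
    (hL : qint q (n + 1 - m) ≠ 0) :
    q ^ m / (qint q m - q ^ m * x) * connector q m (n + 1) x =
      q ^ m / (qint q m - q ^ m * x) * connector q m n x +
        connector q m (n + 1) x * (q ^ (n + 1) / (qint q (n + 1) - q ^ (n + 1) * x)) := by
  have hk : n + 1 - m + m = n + 1 := Nat.sub_add_cancel (Nat.le_succ_of_le hmn)
  have hD := qint_sub_pow_mul_add q x (n + 1 - m) m
  rw [hk] at hD
  have hpow : q ^ (n + 1) = q ^ (n + 1 - m) * q ^ m := by rw [← pow_add, hk]
  rw [connector_succ q x hmn, hD, hpow]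
  rw [hD] at hDn
  generalize qint q (n + 1 - m) = L, q ^ (n + 1 - m) = r, qint q m - q ^ m * x = Dm at *
  rw [mul_comm] at hDn
  field_simp

theorem connector_telescoping_right (q : ℝ) (hq0 : 0 < q) (hq1 : q < 1) (m n : ℕ)
    (hm : 0 < m) (hmn : m ≤ n) (x : ℝ)
    (hx : ∀ h ∈ Finset.Icc 1 n, qint q h - q ^ h * x ≠ 0) :
    q ^ m / (qint q m - q ^ m * x) * connector q m n x =
      ∑ a ∈ Finset.Icc m n, connector q m a x * (q ^ a / (qint q a - q ^ a * x)) := by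
  induction n, hmn using Nat.le_induction with
  | base => rw [Finset.Icc_self, Finset.sum_singleton, mul_comm]
  | succ n hmn ih =>
    have hDm := hx m (Finset.mem_Icc.mpr ⟨hm, by omega⟩)
    have hDn := hx (n + 1) (Finset.mem_Icc.mpr ⟨by omega, le_rfl⟩)
    have hL := (qint_pos hq0 hq1 (Nat.sub_pos_of_lt (Nat.lt_succ_of_le hmn))).ne'
    rw [connector_telescoping_step q x hmn hDm hDn hL, Finset.sum_Icc_succ_top (by omega),
      ih fun h hh => hx h (Finset.Icc_subset_Icc_right (Nat.le_succ n) hh)]
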